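/- arXiv:1810.05086 — 4 statements merged into one kernel-verified Lean document; each statement's English description precedes it below -/
import Mathlib

section
/- Let M be a complete lattice with an involutive antitone negation ', let T be a set and R a binary relation on T such that both R and R⁻¹ are serial. Define Ĝ(p)(x) = ⨅{p(y) : x R y} and Ĥ(p)(x) = ⨅{p(y) : y R x} on T → M. Then for every p : T → M, p ≤ Ĝ((Ĥ(p'))') and p ≤ Ĥ((Ĝ(p'))'), where the order and negation on T → M are pointwise. -/
/-! If `x R y`, then `x` is one of the `R`-predecessors over which `Ĥ(p')(y)` is an infimum, so
`Ĥ(p')(y) ≤ p(x)'` and, negating, `p(x) ≤ (Ĥ(p')(y))'`; taking the infimum over all `y` with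
`x R y` gives `p(x) ≤ Ĝ((Ĥ(p'))')(x)`. The second inequality is the first one for `R⁻¹`. -/

section InvolutiveNegation

variable {M : Type*} [CompleteLattice M] (neg : M → M)
  (hanti : ∀ a b : M, a ≤ b → neg b ≤ neg a) (hinv : ∀ a : M, neg (neg a) = a)
include hanti hinv

theorem le_neg_biInf_neg_of_mem {ι : Type*} {s : Set ι} {f : ι → M} {i : ι} (hi : i ∈ s) :
    f i ≤ neg (⨅ j ∈ s, neg (f j)) :=
  calc f i = neg (neg (f i)) := (hinv _).symm
    _ ≤ neg (⨅ j ∈ s, neg (f j)) := hanti _ _ (biInf_le _ hi)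

theorem le_box_diamond_converse {T : Type*} (R : T → T → Prop) (A B : (T → M) → (T → M))
    (hA : ∀ (p : T → M) (x : T), A p x = ⨅ y ∈ {y : T | R x y}, p y)
    (hB : ∀ (p : T → M) (x : T), B p x = ⨅ y ∈ {y : T | R y x}, p y) (p : T → M) :
    p ≤ A (fun t => neg (B (fun s => neg (p s)) t)) := fun x => by
  rw [hA]
  refine le_iInf₂ fun y (hxy : R x y) => ?_
  rw [hB]
  exact le_neg_biInf_neg_of_mem neg hanti hinv (s := {z | R z y}) hxy

end InvolutiveNegation

theorem stmt_4_general {M T : Type*} [CompleteLattice M]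
    (neg : M → M)
    (hanti : ∀ a b : M, a ≤ b → neg b ≤ neg a)
    (hinv : ∀ a : M, neg (neg a) = a)
    (R : T → T → Prop)
    (G H : (T → M) → (T → M))
    (hGdef : ∀ (p : T → M) (x : T), G p x = ⨅ y ∈ {y : T | R x y}, p y)
    (hHdef : ∀ (p : T → M) (x : T), H p x = ⨅ y ∈ {y : T | R y x}, p y) :
    ∀ p : T → M,
      p ≤ G (fun t => neg (H (fun s => neg (p s)) t)) ∧
      p ≤ H (fun t => neg (G (fun s => neg (p s)) t)) := fun p =>
  ⟨le_box_diamond_converse neg hanti hinv R G H hGdef hHdef p,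
    le_box_diamond_converse neg hanti hinv (flip R) H G hHdef hGdef p⟩

/-- Let `M` be a complete lattice with an involutive antitone negation, `R` a
relation on `T` with both `R` and `R⁻¹` serial, and `Ĝ`, `Ĥ` the operators
constructed by means of `(T, R)`. Then `p ≤ Ĝ((Ĥ(p'))')` and
`p ≤ Ĥ((Ĝ(p'))')` for every `p : T → M` (axiom (P3)). -/
theorem stmt_4 {M T : Type*} [CompleteLattice M]
    (neg : M → M)
    (hanti : ∀ a b : M, a ≤ b → neg b ≤ neg a)
    (hinv : ∀ a : M, neg (neg a) = a)
    (R : T → T → Prop)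
    (hser : ∀ x : T, ∃ y : T, R x y)
    (hser' : ∀ x : T, ∃ y : T, R y x)
    (G H : (T → M) → (T → M))
    (hGdef : ∀ (p : T → M) (x : T), G p x = ⨅ y ∈ {y : T | R x y}, p y)
    (hHdef : ∀ (p : T → M) (x : T), H p x = ⨅ y ∈ {y : T | R y x}, p y) :
    ∀ p : T → M,
      p ≤ G (fun t => neg (H (fun s => neg (p s)) t)) ∧
      p ≤ H (fun t => neg (G (fun s => neg (p s)) t)) :=
  stmt_4_general neg hanti hinv R G H hGdef hHdef
end

section
/- Let A be a De Morgan poset and D a nonempty proper down-set of A. Then κ_D : A → M₂ is a morphism of De Morgan posets: κ_D is monotone, κ_D(0) = (false, false), κ_D(1) = (true, true), and κ_D(a') = (κ_D(a))' for all a ∈ A, where the negation on M₂ is (a,b)' = (¬b, ¬a). -/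
/-- A down-set of a poset. -/
def IsDownSet {A : Type*} [PartialOrder A] (D : Set A) : Prop :=
  ∀ ⦃x y : A⦄, x ≤ y → y ∈ D → x ∈ D

/-- A nonempty proper down-set of a poset. -/
def IsProperDownSet {A : Type*} [PartialOrder A] (D : Set A) : Prop :=
  D.Nonempty ∧ D ≠ Set.univ ∧ IsDownSet D

open Classical in
/-- `hD D a = false` iff `a ∈ D`. -/
noncomputable def hD {A : Type*} (D : Set A) (a : A) : Bool :=
  if a ∈ D then false else true

/-- `κ_D(a) = (h_D(a), h_D^∂(a))` where `h_D^∂(a) = ¬ h_D(a')`. -/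
noncomputable def kappa {A : Type*} (neg : A → A) (D : Set A) (a : A) :
    Bool × Bool := (hD D a, ! hD D (neg a))

/-- The negation of the four-element De Morgan poset `M₂`: `(a,b)' = (¬b, ¬a)`. -/
def negM2 (m : Bool × Bool) : Bool × Bool := (! m.2, ! m.1)

/-- The relation `R_G` on down-sets: `D R_G E` iff `κ_D(G x) ≤ κ_E(x)` for all `x ∈ dom G`. -/
def RG {A : Type*} (neg : A → A) (domG : Set A) (G : A → A) (D E : Set A) : Prop :=
  ∀ x ∈ domG, kappa neg D (G x) ≤ kappa neg E x

section

variable {A : Type*} {D : Set A}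

@[simp]
lemma hD_of_mem {a : A} (ha : a ∈ D) : hD D a = false := by
  simp [hD, ha]

@[simp]
lemma hD_of_notMem {a : A} (ha : a ∉ D) : hD D a = true := by
  simp [hD, ha]

lemma kappa_neg {neg : A → A} (hinv : Function.Involutive neg) (a : A) :
    kappa neg D (neg a) = negM2 (kappa neg D a) := by
  simp [kappa, negM2, hinv a]

variable [PartialOrder A]

lemma IsDownSet.monotone_hD (hdown : IsDownSet D) : Monotone (hD D) := by
  intro a b hab
  by_cases hb : b ∈ D
  · simp [hb, hdown hab hb]
  · simp [hb]

lemma monotone_kappa {neg : A → A} (hanti : Antitone neg) (hdown : IsDownSet D) :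
    Monotone (kappa neg D) := fun _ _ hab =>
  Prod.mk_le_mk.mpr
    ⟨hdown.monotone_hD hab, compl_le_compl (hdown.monotone_hD (hanti hab))⟩

lemma IsProperDownSet.bot_mem [OrderBot A] (hDp : IsProperDownSet D) : ⊥ ∈ D :=
  let ⟨⟨_, hd⟩, _, hdown⟩ := hDp
  hdown bot_le hd

lemma IsProperDownSet.top_notMem [OrderTop A] (hDp : IsProperDownSet D) : ⊤ ∉ D :=
  fun htop => hDp.2.1 (Set.eq_univ_of_forall fun _ => hDp.2.2 le_top htop)

variable [BoundedOrder A] {neg : A → A}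

lemma neg_bot_of_antitone_of_involutive (hanti : Antitone neg)
    (hinv : Function.Involutive neg) : neg ⊥ = ⊤ :=
  top_le_iff.mp (hinv ⊤ ▸ hanti bot_le)

lemma neg_top_of_antitone_of_involutive (hanti : Antitone neg)
    (hinv : Function.Involutive neg) : neg ⊤ = ⊥ := by
  rw [← neg_bot_of_antitone_of_involutive hanti hinv, hinv]

lemma kappa_bot (hanti : Antitone neg) (hinv : Function.Involutive neg)
    (hDp : IsProperDownSet D) : kappa neg D ⊥ = (false, false) := by
  simp [kappa, neg_bot_of_antitone_of_involutive hanti hinv, hDp.bot_mem, hDp.top_notMem]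

lemma kappa_top (hanti : Antitone neg) (hinv : Function.Involutive neg)
    (hDp : IsProperDownSet D) : kappa neg D ⊤ = (true, true) := by
  simp [kappa, neg_top_of_antitone_of_involutive hanti hinv, hDp.bot_mem, hDp.top_notMem]

end

/-- For any nonempty proper down-set `D` of a De Morgan poset `A`, the map
`κ_D : A → M₂` is a morphism of De Morgan posets. -/
theorem stmt_5 {A : Type*} [PartialOrder A] [BoundedOrder A]
    (neg : A → A)
    (hanti : ∀ a b : A, a ≤ b → neg b ≤ neg a)
    (hinv : ∀ a : A, neg (neg a) = a)
    (D : Set A) (hDp : IsProperDownSet D) :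
    Monotone (kappa neg D) ∧
    kappa neg D ⊥ = (false, false) ∧
    kappa neg D ⊤ = (true, true) ∧
    (∀ a : A, kappa neg D (neg a) = negM2 (kappa neg D a)) := by
  have hneg : Antitone neg := fun a b => hanti a b
  exact ⟨monotone_kappa hneg hDp.2.2, kappa_bot hneg hinv hDp, kappa_top hneg hinv hDp,
    kappa_neg hinv⟩
end

section
/- Let A be a De Morgan poset and G a partial semi-tense operator on A with domain dom G. Then the relation R_G is serial: for every nonempty proper down-set D of A there exists a nonempty proper down-set E of A with D R_G E. -/
lemma hD_le_hD_iff {A : Type*} {D E : Set A} {a b : A} : hD D a ≤ hD E b ↔ (b ∈ E → a ∈ D) := by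
  unfold hD
  by_cases ha : a ∈ D <;> by_cases hb : b ∈ E <;> simp [ha, hb]

lemma kappa_le_kappa_iff {A : Type*} {neg : A → A} {D E : Set A} {a b : A} :
    kappa neg D a ≤ kappa neg E b ↔ (b ∈ E → a ∈ D) ∧ (neg a ∈ D → neg b ∈ E) := by
  rw [kappa, kappa, Prod.mk_le_mk, hD_le_hD_iff]
  unfold hD
  by_cases ha : neg a ∈ D <;> by_cases hb : neg b ∈ E <;> simp [ha, hb]

section

variable {A : Type*} [PartialOrder A]

lemma neg_top_eq_bot [BoundedOrder A] {neg : A → A}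
    (hanti : ∀ a b : A, a ≤ b → neg b ≤ neg a) (hinv : ∀ a : A, neg (neg a) = a) :
    neg ⊤ = ⊥ :=
  le_bot_iff.mp (by simpa only [hinv] using hanti (neg ⊥) ⊤ le_top)

lemma isProperDownSet_iff [BoundedOrder A] {D : Set A} (hD : IsDownSet D) :
    IsProperDownSet D ↔ ⊥ ∈ D ∧ ⊤ ∉ D := by
  constructor
  · rintro ⟨⟨a, ha⟩, hne, -⟩
    exact ⟨hD bot_le ha, fun htop => hne (Set.eq_univ_of_forall fun _ => hD le_top htop)⟩
  · rintro ⟨hbot, htop⟩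
    exact ⟨⟨⊥, hbot⟩, fun h => htop (h ▸ Set.mem_univ ⊤), hD⟩

def rgSuccessor (neg : A → A) (domG : Set A) (G : A → A) (D : Set A) : Set A :=
  {a | ∃ x ∈ domG, neg (G x) ∈ D ∧ a ≤ neg x}

lemma isDownSet_rgSuccessor (neg : A → A) (domG : Set A) (G : A → A) (D : Set A) :
    IsDownSet (rgSuccessor neg domG G D) := by
  rintro a b hab ⟨x, hx, hGx, hbx⟩
  exact ⟨x, hx, hGx, hab.trans hbx⟩

lemma isProperDownSet_rgSuccessor [BoundedOrder A] {neg : A → A}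
    (hanti : ∀ a b : A, a ≤ b → neg b ≤ neg a) (hinv : ∀ a : A, neg (neg a) = a)
    {domG : Set A} {G : A → A} (htop : (⊤ : A) ∈ domG) (hG0 : G ⊥ = ⊥) (hG1 : G ⊤ = ⊤)
    {D : Set A} (hD : IsProperDownSet D) : IsProperDownSet (rgSuccessor neg domG G D) := by
  have hnegtop := neg_top_eq_bot hanti hinv
  obtain ⟨hbotD, htopD⟩ := (isProperDownSet_iff hD.2.2).mp hD
  refine (isProperDownSet_iff (isDownSet_rgSuccessor neg domG G D)).mpr
    ⟨⟨⊤, htop, by rwa [hG1, hnegtop], bot_le⟩, ?_⟩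
  rintro ⟨x, -, hGx, htopx⟩
  have hx : x = ⊥ := by rw [← hinv x, top_le_iff.mp htopx, hnegtop]
  rw [hx, hG0, ← hnegtop, hinv] at hGx
  exact htopD hGx

lemma rG_rgSuccessor {neg : A → A} (hinv : ∀ a : A, neg (neg a) = a)
    {domG : Set A} {G : A → A}
    (hP4 : ∀ x y : A, x ≤ y → x ∈ domG → neg y ∈ domG → G x ≤ neg (G (neg y)))
    {D : Set A} (hD : IsDownSet D) : RG neg domG G D (rgSuccessor neg domG G D) := by
  intro x hx
  refine kappa_le_kappa_iff.mpr ⟨?_, fun hGx => ⟨x, hx, hGx, le_rfl⟩⟩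
  rintro ⟨y, hy, hGy, hxy⟩
  have hGxy := hP4 x (neg y) hxy hx (by rwa [hinv])
  rw [hinv] at hGxy
  exact hD hGxy hGy

end

theorem stmt_11_general {A : Type*} [PartialOrder A] [BoundedOrder A]
    (neg : A → A)
    (hanti : ∀ a b : A, a ≤ b → neg b ≤ neg a)
    (hinv : ∀ a : A, neg (neg a) = a)
    (domG : Set A) (G : A → A)
    (htop : (⊤ : A) ∈ domG)
    (hG0 : G ⊥ = ⊥) (hG1 : G ⊤ = ⊤)
    (hP4 : ∀ x y : A, x ≤ y → x ∈ domG → neg y ∈ domG → G x ≤ neg (G (neg y))) :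
    ∀ D : Set A, IsProperDownSet D →
      ∃ E : Set A, IsProperDownSet E ∧ RG neg domG G D E :=
  fun D hD => ⟨rgSuccessor neg domG G D,
    isProperDownSet_rgSuccessor hanti hinv htop hG0 hG1 hD, rG_rgSuccessor hinv hP4 hD.2.2⟩

/-- The relation `R_G` induced by a partial semi-tense operator `G` is serial:
for every nonempty proper down-set `D` there is a nonempty proper down-set `E`
with `D R_G E`. -/
theorem stmt_11 {A : Type*} [PartialOrder A] [BoundedOrder A]
    (neg : A → A)
    (hanti : ∀ a b : A, a ≤ b → neg b ≤ neg a)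
    (hinv : ∀ a : A, neg (neg a) = a)
    (domG : Set A) (G : A → A)
    (hbot : (⊥ : A) ∈ domG) (htop : (⊤ : A) ∈ domG)
    (hG0 : G ⊥ = ⊥) (hG1 : G ⊤ = ⊤)
    (hP2 : ∀ x ∈ domG, ∀ y ∈ domG, x ≤ y → G x ≤ G y)
    (hP4 : ∀ x y : A, x ≤ y → x ∈ domG → neg y ∈ domG → G x ≤ neg (G (neg y))) :
    ∀ D : Set A, IsProperDownSet D →
      ∃ E : Set A, IsProperDownSet E ∧ RG neg domG G D E :=
  stmt_11_general neg hanti hinv domG G htop hG0 hG1 hP4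
end

section
/- Let (A; G, H) be a partial dynamic De Morgan algebra such that (a) x ∈ dom G implies G(x)' ∈ dom H, and (b) x ∈ dom H implies H(x)' ∈ dom G. Then R_G = (R_H)⁻¹, i.e., for all nonempty proper down-sets D, E of A: D R_G E if and only if E R_H D. -/
/-! Unfolding `κ`, `D R_G E` says that for `y ∈ dom G`, `y ∈ E → G y ∈ D` and
`(G y)' ∈ D → y' ∈ E`. Given `x ∈ dom H`, apply this to `y = (H x)'`; (P3) gives
`x' ≤ G((H x)')`, so the down-set `D` transfers both implications to the two halves of
`κ_E(H x) ≤ κ_D(x)`. The converse is the same argument with `G` and `H` exchanged. -/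

lemma hD_le_iff {A : Type*} (D E : Set A) (a b : A) :
    hD D a ≤ hD E b ↔ (b ∈ E → a ∈ D) := by
  unfold hD
  by_cases ha : a ∈ D <;> by_cases hb : b ∈ E <;> simp [ha, hb]

lemma kappa_le_iff {A : Type*} (neg : A → A) (D E : Set A) (a b : A) :
    kappa neg D a ≤ kappa neg E b ↔ (b ∈ E → a ∈ D) ∧ (neg a ∈ D → neg b ∈ E) := by
  have not_le_not : ∀ x y : Bool, (!x) ≤ (!y) ↔ y ≤ x := by decide
  rw [kappa, kappa, Prod.mk_le_mk, hD_le_iff, not_le_not, hD_le_iff]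

lemma RG_flip {A : Type*} [PartialOrder A] (neg : A → A)
    (hanti : ∀ a b : A, a ≤ b → neg b ≤ neg a) (hinv : ∀ a : A, neg (neg a) = a)
    (domG : Set A) (G : A → A) (domH : Set A) (H : A → A)
    (hdom : ∀ x ∈ domH, neg (H x) ∈ domG) (hle : ∀ x ∈ domH, neg x ≤ G (neg (H x)))
    {D E : Set A} (hD : IsDownSet D) (hR : RG neg domG G D E) :
    RG neg domH H E D := by
  intro x hx
  obtain ⟨hG_mem, hneg_mem⟩ := (kappa_le_iff neg D E _ _).mp (hR _ (hdom x hx))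
  rw [kappa_le_iff]
  constructor
  · intro hxD
    have hle' : neg (G (neg (H x))) ≤ x := by simpa only [hinv] using hanti _ _ (hle x hx)
    simpa only [hinv] using hneg_mem (hD hle' hxD)
  · exact fun hHx => hD (hle x hx) (hG_mem hHx)

theorem stmt_13_general {A : Type*} [PartialOrder A]
    (neg : A → A)
    (hanti : ∀ a b : A, a ≤ b → neg b ≤ neg a)
    (hinv : ∀ a : A, neg (neg a) = a)
    (domG : Set A) (G : A → A) (domH : Set A) (H : A → A)
    -- (P3)
    (hP3G : ∀ x : A, neg x ∈ domH → neg (H (neg x)) ∈ domG →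
      x ≤ G (neg (H (neg x))))
    (hP3H : ∀ x : A, neg x ∈ domG → neg (G (neg x)) ∈ domH →
      x ≤ H (neg (G (neg x))))
    -- domain conditions (a) and (b)
    (ha : ∀ x ∈ domG, neg (G x) ∈ domH)
    (hb : ∀ x ∈ domH, neg (H x) ∈ domG) :
    ∀ D E : Set A, IsProperDownSet D → IsProperDownSet E →
      (RG neg domG G D E ↔ RG neg domH H E D) := by
  intro D E hD hE
  have hleG : ∀ x ∈ domH, neg x ≤ G (neg (H x)) := fun x hx => by
    simpa only [hinv] using hP3G (neg x) (by rwa [hinv]) (by simpa only [hinv] using hb x hx)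
  have hleH : ∀ x ∈ domG, neg x ≤ H (neg (G x)) := fun x hx => by
    simpa only [hinv] using hP3H (neg x) (by rwa [hinv]) (by simpa only [hinv] using ha x hx)
  exact ⟨RG_flip neg hanti hinv domG G domH H hb hleG hD.2.2,
    RG_flip neg hanti hinv domH H domG G ha hleH hE.2.2⟩

/-- For a partial dynamic De Morgan algebra `(A; G, H)` satisfying the domain
conditions (a) and (b), the induced relations satisfy `R_G = (R_H)⁻¹`. -/
theorem stmt_13 {A : Type*} [PartialOrder A] [BoundedOrder A]
    (neg : A → A)
    (hanti : ∀ a b : A, a ≤ b → neg b ≤ neg a)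
    (hinv : ∀ a : A, neg (neg a) = a)
    (domG : Set A) (G : A → A) (domH : Set A) (H : A → A)
    -- (P1)
    (hbotG : (⊥ : A) ∈ domG) (htopG : (⊤ : A) ∈ domG)
    (hbotH : (⊥ : A) ∈ domH) (htopH : (⊤ : A) ∈ domH)
    (hG0 : G ⊥ = ⊥) (hG1 : G ⊤ = ⊤) (hH0 : H ⊥ = ⊥) (hH1 : H ⊤ = ⊤)
    -- (P2)
    (hP2G : ∀ x ∈ domG, ∀ y ∈ domG, x ≤ y → G x ≤ G y)
    (hP2H : ∀ x ∈ domH, ∀ y ∈ domH, x ≤ y → H x ≤ H y)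
    -- (P3)
    (hP3G : ∀ x : A, neg x ∈ domH → neg (H (neg x)) ∈ domG →
      x ≤ G (neg (H (neg x))))
    (hP3H : ∀ x : A, neg x ∈ domG → neg (G (neg x)) ∈ domH →
      x ≤ H (neg (G (neg x))))
    -- (P4)
    (hP4G : ∀ x y : A, x ≤ y → x ∈ domG → neg y ∈ domG → G x ≤ neg (G (neg y)))
    (hP4H : ∀ x y : A, x ≤ y → x ∈ domH → neg y ∈ domH → H x ≤ neg (H (neg y)))
    -- domain conditions (a) and (b)
    (ha : ∀ x ∈ domG, neg (G x) ∈ domH)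
    (hb : ∀ x ∈ domH, neg (H x) ∈ domG) :
    ∀ D E : Set A, IsProperDownSet D → IsProperDownSet E →
      (RG neg domG G D E ↔ RG neg domH H E D) :=
  stmt_13_general neg hanti hinv domG G domH H hP3G hP3H ha hb
end
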